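/- arXiv:2302.01658 — 5 statements merged into one kernel-verified Lean document; each statement's English description precedes it below -/
import Mathlib

section
/- Let v ∈ ℓ₂(∨), and for each ν_t ∈ ∨_t and each i ∈ {1,…,d} let Λ^{(i)}_{ν_t} ⊆ ∨₁ be arbitrary subsets; set Λ = ⋃_{ν_t ∈ ∨_t} {ν_t} × Λ^{(1)}_{ν_t} × ⋯ × Λ^{(d)}_{ν_t} ⊆ ∨. Then ‖v − R_Λ v‖_{ℓ₂(∨)} ≤ ( ∑_{ν_t ∈ ∨_t} ∑_{i=1}^d ∑_{μ ∈ ∨₁ \ Λ^{(i)}_{ν_t}} π^{(t,i)}_{ν_t,μ}(v)² )^{1/2}. -/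
/-!
Pointwise, `(v - R_Λ v)_q² = 1_{q ∉ Λ} v_q²`, and `q = (t, ν) ∉ Λ` means `ν_i ∉ Λ^{(i)}_t` for
some `i`, so the union bound gives `1_{q ∉ Λ} ≤ ∑_i 1_{ν_i ∉ Λ^{(i)}_t}`. Summing over `q` and
grouping the `ν` with `ν_i ∉ Λ^{(i)}_t` according to the value `μ = ν_i` turns the `i`-th term into
`∑_{μ ∉ Λ^{(i)}_t} π^{(t,i)}_{t,μ}(v)²`. The computation is done in `ℝ≥0∞`, where all sums may be
rearranged freely, and transported back to `ℝ` using that `v` is square summable.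
-/

open scoped BigOperators

/-- Spatio-temporal contraction `π^{(t,i)}_{ν_t,μ}(v)`. -/
noncomputable def contr {T X : Type*} (d : ℕ) (v : T × (Fin d → X) → ℝ)
    (i : Fin d) (t : T) (μ : X) : ℝ :=
  Real.sqrt (∑' ν : {ν : Fin d → X // ν i = μ}, (v (t, ν.1)) ^ 2)

open scoped ENNReal

theorem Set.indicator_iUnion_le_sum {α ι M : Type*} [Fintype ι] [AddCommMonoid M]
    [PartialOrder M] [CanonicallyOrderedAdd M] (s : ι → Set α) (f : α → M) (a : α) :
    (⋃ i, s i).indicator f a ≤ ∑ i, (s i).indicator f a := by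
  by_cases ha : a ∈ ⋃ i, s i
  · obtain ⟨i, hi⟩ := Set.mem_iUnion.mp ha
    rw [Set.indicator_of_mem ha, ← Set.indicator_of_mem hi f]
    exact Finset.single_le_sum (f := fun i => (s i).indicator f a) (fun _ _ => zero_le)
      (Finset.mem_univ i)
  · rw [Set.indicator_of_notMem ha]
    exact zero_le

theorem ENNReal.tsum_subtype_fiberwise {α β : Type*} (g : α → ℝ≥0∞) (f : α → β) (q : β → Prop) :
    ∑' y : {y // q y}, ∑' x : {x // f x = y}, g x = ∑' x : {x // q (f x)}, g x := by
  rw [← ENNReal.tsum_sigma fun (y : {y // q y}) (x : {x // f x = y}) => g x,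
    ← (Equiv.sigmaSubtypeFiberEquivSubtype f (p := fun x => q (f x)) fun _ => Iff.rfl).tsum_eq]
  rfl

theorem tsum_eq_toReal_tsum_ofReal {α : Type*} {f : α → ℝ} (hf : ∀ a, 0 ≤ f a) :
    ∑' a, f a = (∑' a, ENNReal.ofReal (f a)).toReal := by
  rw [ENNReal.tsum_toReal_eq fun _ => ENNReal.ofReal_ne_top]
  exact tsum_congr fun a => (ENNReal.toReal_ofReal (hf a)).symm

theorem tsum_sum_tsum_eq_toReal_tsum_sum_tsum_ofReal {T ι : Type*} [Fintype ι] {M : T → ι → Type*}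
    {f : ∀ t i, M t i → ℝ} (hf : ∀ t i m, 0 ≤ f t i m)
    (h : ∑' t, ∑ i, ∑' m, ENNReal.ofReal (f t i m) ≠ ∞) :
    ∑' t, ∑ i, ∑' m, f t i m = (∑' t, ∑ i, ∑' m, ENNReal.ofReal (f t i m)).toReal := by
  rw [ENNReal.tsum_toReal_eq (ENNReal.ne_top_of_tsum_ne_top h)]
  refine tsum_congr fun t => ?_
  rw [ENNReal.toReal_sum fun i _ =>
    ENNReal.sum_ne_top.mp (ENNReal.ne_top_of_tsum_ne_top h t) i (Finset.mem_univ i)]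
  exact Finset.sum_congr rfl fun i _ => tsum_eq_toReal_tsum_ofReal (hf t i)

theorem ofReal_sq_sub_indicator {α : Type*} (f : α → ℝ) (s : Set α) (a : α) :
    ENNReal.ofReal ((f a - s.indicator f a) ^ 2) =
      sᶜ.indicator (fun a => ENNReal.ofReal (f a ^ 2)) a := by
  by_cases ha : a ∈ s <;> simp [ha]

section Contraction

variable {T X : Type*} {d : ℕ} (v : T × (Fin d → X) → ℝ)

theorem ofReal_contr_sq (hv : Summable fun q => v q ^ 2) (i : Fin d) (t : T) (μ : X) :
    ENNReal.ofReal (contr d v i t μ ^ 2) =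
      ∑' ν : {ν : Fin d → X // ν i = μ}, ENNReal.ofReal (v (t, ν.1) ^ 2) := by
  rw [contr, Real.sq_sqrt (tsum_nonneg fun _ => sq_nonneg _),
    ENNReal.ofReal_tsum_of_nonneg (fun _ => sq_nonneg _) ((hv.prod_factor t).subtype _)]

theorem tsum_ofReal_contr_sq_compl (hv : Summable fun q => v q ^ 2) (i : Fin d) (t : T)
    (s : Set X) :
    ∑' μ : {μ // μ ∉ s}, ENNReal.ofReal (contr d v i t μ ^ 2) =
      ∑' ν : {ν : Fin d → X // ν i ∉ s}, ENNReal.ofReal (v (t, ν.1) ^ 2) := by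
  simp_rw [ofReal_contr_sq v hv]
  exact ENNReal.tsum_subtype_fiberwise (fun ν => ENNReal.ofReal (v (t, ν) ^ 2)) (· i) (· ∉ s)

theorem tsum_sum_tsum_ofReal_contr_sq (hv : Summable fun q => v q ^ 2) (Λs : T → Fin d → Set X) :
    ∑' t, ∑ i, ∑' μ : {μ // μ ∉ Λs t i}, ENNReal.ofReal (contr d v i t μ ^ 2) =
      ∑' q, ∑ i, {q : T × (Fin d → X) | q.2 i ∉ Λs q.1 i}.indicator
        (fun q => ENNReal.ofReal (v q ^ 2)) q := by
  simp_rw [tsum_ofReal_contr_sq_compl v hv]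
  rw [ENNReal.tsum_prod']
  refine tsum_congr fun t => ?_
  rw [Summable.tsum_finsetSum fun _ _ => ENNReal.summable]
  exact Finset.sum_congr rfl fun i _ =>
    tsum_subtype {ν | ν i ∉ Λs t i} fun ν => ENNReal.ofReal (v (t, ν) ^ 2)

theorem tsum_sum_tsum_ofReal_contr_sq_ne_top (hv : Summable fun q => v q ^ 2)
    (Λs : T → Fin d → Set X) :
    ∑' t, ∑ i, ∑' μ : {μ // μ ∉ Λs t i}, ENNReal.ofReal (contr d v i t μ ^ 2) ≠ ∞ := by
  rw [tsum_sum_tsum_ofReal_contr_sq v hv]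
  refine ne_top_of_le_ne_top ?_ (ENNReal.tsum_le_tsum fun q =>
    Finset.sum_le_sum fun i _ => Set.indicator_le_self _ _ q)
  simp only [Finset.sum_const, Finset.card_univ, Fintype.card_fin, nsmul_eq_mul,
    ENNReal.tsum_mul_left]
  exact ENNReal.mul_ne_top (ENNReal.natCast_ne_top d) hv.tsum_ofReal_ne_top

theorem tsum_ofReal_restriction_error_sq_le (hv : Summable fun q => v q ^ 2)
    (Λs : T → Fin d → Set X) :
    ∑' q, ENNReal.ofReal ((v q - {q : T × (Fin d → X) | ∀ i, q.2 i ∈ Λs q.1 i}.indicator v q) ^ 2)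
      ≤ ∑' t, ∑ i, ∑' μ : {μ // μ ∉ Λs t i}, ENNReal.ofReal (contr d v i t μ ^ 2) := by
  have hcompl : {q : T × (Fin d → X) | ∀ i, q.2 i ∈ Λs q.1 i}ᶜ =
      ⋃ i, {q : T × (Fin d → X) | q.2 i ∉ Λs q.1 i} := by
    ext q
    simp
  simp_rw [tsum_sum_tsum_ofReal_contr_sq v hv, ofReal_sq_sub_indicator, hcompl]
  exact ENNReal.tsum_le_tsum fun q => Set.indicator_iUnion_le_sum _ _ q

end Contraction

theorem restriction_error_le_contractions_general {T X : Type*}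
    (d : ℕ)
    (v : T × (Fin d → X) → ℝ) (hv : Summable fun q => (v q) ^ 2)
    (Λs : T → Fin d → Set X) :
    Real.sqrt (∑' q : T × (Fin d → X),
        (v q - Set.indicator {q : T × (Fin d → X) | ∀ i, q.2 i ∈ Λs q.1 i} v q) ^ 2) ≤
      Real.sqrt (∑' t : T, ∑ i : Fin d,
        ∑' μ : {μ : X // μ ∉ Λs t i}, (contr d v i t μ.1) ^ 2) := by
  have hfin := tsum_sum_tsum_ofReal_contr_sq_ne_top v hv Λs
  refine Real.sqrt_le_sqrt ?_
  rw [tsum_eq_toReal_tsum_ofReal fun _ => sq_nonneg _,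
    tsum_sum_tsum_eq_toReal_tsum_sum_tsum_ofReal (fun _ _ _ => sq_nonneg _) hfin]
  exact ENNReal.toReal_mono hfin (tsum_ofReal_restriction_error_sq_le v hv Λs)

/-- for index sets `Λ = ⋃_{ν_t} {ν_t} × Λ^{(1)}_{ν_t} × ⋯ × Λ^{(d)}_{ν_t}`, the
restriction error is bounded by the tails of the contractions. -/
theorem restriction_error_le_contractions {T X : Type*} [Countable T] [Countable X]
    (d : ℕ) (hd : 1 ≤ d)
    (v : T × (Fin d → X) → ℝ) (hv : Summable fun q => (v q) ^ 2)
    (Λs : T → Fin d → Set X) :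
    Real.sqrt (∑' q : T × (Fin d → X),
        (v q - Set.indicator {q : T × (Fin d → X) | ∀ i, q.2 i ∈ Λs q.1 i} v q) ^ 2) ≤
      Real.sqrt (∑' t : T, ∑ i : Fin d,
        ∑' μ : {μ : X // μ ∉ Λs t i}, (contr d v i t μ.1) ^ 2) :=
  restriction_error_le_contractions_general d v hv Λs
end

section
/- Let v ∈ ℓ₂(∨), and for each ν_t ∈ ∨_t and each i ∈ {1,…,d} let Λ̂^{(i)}_{ν_t} ⊆ ∨₁ be arbitrary subsets; set Λ̂ = ⋃_{ν_t ∈ ∨_t} {ν_t} × Λ̂^{(1)}_{ν_t} × ⋯ × Λ̂^{(d)}_{ν_t}. Then ( ∑_{ν_t ∈ ∨_t} ∑_{i=1}^d ∑_{μ ∈ ∨₁ \ Λ̂^{(i)}_{ν_t}} π^{(t,i)}_{ν_t,μ}(v)² )^{1/2} ≤ √d · ‖v − R_{Λ̂} v‖_{ℓ₂(∨)}. -/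
open scoped BigOperators

/-!
Squaring a contraction sums `v²` over a fibre `{ν | ν i = μ}`, so summing over `μ ∉ Λ̂^{(i)}_{ν_t}`
gives the `ℓ₂`-mass of `v` on the slab `{ν | ν i ∉ Λ̂^{(i)}_{ν_t}}`. These `d` slabs all lie in the
complement of `Λ̂`, so their masses add up to at most `d ‖v - R_{Λ̂} v‖²`.
-/

theorem tsum_subtype_tsum_fiber_eq_tsum_indicator {α β E : Type*} [AddCommGroup E]
    [UniformSpace E] [IsUniformAddGroup E] [CompleteSpace E] [T0Space E]
    (p : α → β) (q : β → Prop) {f : α → E} (hf : Summable f) :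
    ∑' b : Subtype q, ∑' a : {a // p a = b}, f a = ∑' a, {a | q (p a)}.indicator f a := by
  let e := Equiv.sigmaSubtypeFiberEquivSubtype p (p := fun a => q (p a)) fun _ => Iff.rfl
  have hsigma : Summable fun x => f (e x) := (hf.subtype _).comp_injective e.injective
  calc _ = ∑' x, f (e x) := hsigma.tsum_sigma.symm
    _ = ∑' a : {a // q (p a)}, f a := e.tsum_eq fun a => f a
    _ = _ := tsum_subtype {a | q (p a)} f

theorem sum_tsum_indicator_le_card_mul {ι α : Type*} [Fintype ι] {f : α → ℝ} (hf0 : 0 ≤ f)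
    (hf : Summable f) (s : ι → Set α) :
    ∑ i, ∑' a, (s i).indicator f a ≤ Fintype.card ι * ∑' a, (⋃ i, s i).indicator f a := by
  calc ∑ i, ∑' a, (s i).indicator f a ≤ ∑ _i : ι, ∑' a, (⋃ i, s i).indicator f a :=
        Finset.sum_le_sum fun i _ => (hf.indicator _).tsum_mono (hf.indicator _)
          (Set.indicator_le_indicator_of_subset (Set.subset_iUnion s i) hf0)
    _ = Fintype.card ι * ∑' a, (⋃ i, s i).indicator f a := by
        rw [Finset.sum_const, nsmul_eq_mul, Finset.card_univ]

section Contraction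

variable {T X : Type*} {d : ℕ} {v : T × (Fin d → X) → ℝ}

theorem contr_sq (i : Fin d) (t : T) (μ : X) :
    contr d v i t μ ^ 2 = ∑' ν : {ν : Fin d → X // ν i = μ}, v (t, ν) ^ 2 :=
  Real.sq_sqrt (tsum_nonneg fun _ => sq_nonneg _)

theorem tsum_contr_sq_eq_tsum_indicator (hv : Summable fun q => v q ^ 2) (i : Fin d) (t : T)
    (s : Set X) :
    ∑' μ : {μ : X // μ ∉ s}, contr d v i t μ ^ 2 =
      ∑' ν, {ν : Fin d → X | ν i ∉ s}.indicator (fun ν => v (t, ν) ^ 2) ν := by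
  simp_rw [contr_sq]
  exact tsum_subtype_tsum_fiber_eq_tsum_indicator (fun ν => ν i) (· ∉ s) (hv.prod_factor t)

end Contraction

theorem contraction_tails_le_sqrt_d_mul_restriction_error_general
    {T X : Type*}
    (d : ℕ)
    (v : T × (Fin d → X) → ℝ) (hv : Summable fun q => (v q) ^ 2)
    (Λs : T → Fin d → Set X) :
    Real.sqrt (∑' t : T, ∑ i : Fin d,
        ∑' μ : {μ : X // μ ∉ Λs t i}, (contr d v i t μ.1) ^ 2) ≤
      Real.sqrt d *
        Real.sqrt (∑' q : T × (Fin d → X),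
          (v q - Set.indicator {q : T × (Fin d → X) | ∀ i, q.2 i ∈ Λs q.1 i} v q) ^ 2) := by
  set S := {q : T × (Fin d → X) | ∀ i, q.2 i ∈ Λs q.1 i}
  set f := fun q => v q ^ 2
  have herr : ∀ q, (v q - S.indicator v q) ^ 2 = Sᶜ.indicator f q := fun q => by
    by_cases hq : q ∈ S <;> simp [hq, f]
  have hslab : ∀ t, ⋃ i, {ν : Fin d → X | ν i ∉ Λs t i} = (Prod.mk t) ⁻¹' Sᶜ := fun t => by
    ext ν; simp [S]
  have htail : ∀ t, ∑ i, ∑' μ : {μ : X // μ ∉ Λs t i}, contr d v i t μ ^ 2 ≤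
      d * ∑' ν, Sᶜ.indicator f (t, ν) := fun t => by
    simp_rw [tsum_contr_sq_eq_tsum_indicator hv, ← Set.indicator_comp_right (Prod.mk t), ← hslab]
    simpa [f, Function.comp_def] using
      sum_tsum_indicator_le_card_mul (fun _ => sq_nonneg _) (hv.prod_factor t)
        fun i => {ν | ν i ∉ Λs t i}
  have hcompl : Summable (Sᶜ.indicator f) := hv.indicator _
  calc _ ≤ Real.sqrt (∑' t, d * ∑' ν, Sᶜ.indicator f (t, ν)) := by
        refine Real.sqrt_le_sqrt (Summable.tsum_le_tsum htail ?_ (hcompl.prod.mul_left _))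
        exact .of_nonneg_of_le (fun _ => by positivity) htail (hcompl.prod.mul_left _)
    _ = Real.sqrt d * Real.sqrt (∑' q, (v q - S.indicator v q) ^ 2) := by
        rw [tsum_mul_left, ← hcompl.tsum_prod, tsum_congr herr, Real.sqrt_mul (Nat.cast_nonneg d)]

/-- converse bound, the contraction tails are bounded by `√d` times the
restriction error for product-structured index sets. -/
theorem contraction_tails_le_sqrt_d_mul_restriction_error
    {T X : Type*} [Countable T] [Countable X]
    (d : ℕ) (hd : 1 ≤ d)
    (v : T × (Fin d → X) → ℝ) (hv : Summable fun q => (v q) ^ 2)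
    (Λs : T → Fin d → Set X) :
    Real.sqrt (∑' t : T, ∑ i : Fin d,
        ∑' μ : {μ : X // μ ∉ Λs t i}, (contr d v i t μ.1) ^ 2) ≤
      Real.sqrt d *
        Real.sqrt (∑' q : T × (Fin d → X),
          (v q - Set.indicator {q : T × (Fin d → X) | ∀ i, q.2 i ∈ Λs q.1 i} v q) ^ 2) :=
  contraction_tails_le_sqrt_d_mul_restriction_error_general d v hv Λs
end

section
/- For all real a > 0 and s > 0, the improper integral converges and ∫₀^∞ (π y)^{−1/2} ( 1 − 2 a^{1/4} √y · F(a^{1/4} √y) ) e^{−ys} dy = √s / ( s + √a ). -/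
/-!
Substituting `y = x²` turns the integral into `(2/√π) ∫₀^∞ F'(bx) e^{-sx²} dx` with `b = a^{1/4}`.
Since `F' = 1 - 2xF`, the function `G(x) = b F(bx) e^{-sx²}` has derivative
`(b² + s) F'(bx) e^{-sx²} - s e^{-sx²}`. As `G` vanishes at `0` and at `∞` (`F` is bounded on
`[0, ∞)`), the integral of `F'(bx) e^{-sx²}` is `s / (s + b²)` times the half Gaussian integral
`√(π/s) / 2`.
-/

open MeasureTheory

/-- The Dawson function `F(x) = e^{−x²} ∫₀ˣ e^{t²} dt`. -/
noncomputable def dawson (x : ℝ) : ℝ := Real.exp (-x ^ 2) * ∫ t in (0 : ℝ)..x, Real.exp (t ^ 2)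

open Set Filter Topology Real

theorem hasDerivAt_dawson (x : ℝ) : HasDerivAt dawson (1 - 2 * x * dawson x) x := by
  have hint : HasDerivAt (fun u => ∫ t in (0 : ℝ)..u, exp (t ^ 2)) (exp (x ^ 2)) x :=
    intervalIntegral.integral_hasDerivAt_right (Continuous.intervalIntegrable (by fun_prop) _ _)
      (Continuous.stronglyMeasurableAtFilter (by fun_prop) _ _) (by fun_prop)
  have hgauss : HasDerivAt (fun u => exp (-u ^ 2)) (exp (-x ^ 2) * -(2 * x)) x := by
    simpa using ((hasDerivAt_pow 2 x).neg).exp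
  refine (hgauss.mul hint).congr_deriv ?_
  rw [mul_assoc, ← exp_add, neg_add_cancel, exp_zero]
  unfold dawson
  ring

theorem continuous_dawson : Continuous dawson :=
  continuous_iff_continuousAt.2 fun x => (hasDerivAt_dawson x).continuousAt

@[simp]
theorem dawson_zero : dawson 0 = 0 := by simp [dawson]

section NonnegArgument

variable {x : ℝ}

theorem dawson_nonneg (hx : 0 ≤ x) : 0 ≤ dawson x :=
  mul_nonneg (exp_pos _).le (intervalIntegral.integral_nonneg hx fun _ _ => (exp_pos _).le)

theorem dawson_le_self (hx : 0 ≤ x) : dawson x ≤ x := by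
  have hint : ∫ t in (0 : ℝ)..x, exp (t ^ 2) ≤ ∫ _ in (0 : ℝ)..x, exp (x ^ 2) :=
    intervalIntegral.integral_mono_on hx (Continuous.intervalIntegrable (by fun_prop) _ _)
      intervalIntegrable_const fun t ht => exp_le_exp.2 (by nlinarith [ht.1, ht.2])
  calc dawson x ≤ exp (-x ^ 2) * (x * exp (x ^ 2)) := by
        rw [intervalIntegral.integral_const, sub_zero, smul_eq_mul] at hint
        exact mul_le_mul_of_nonneg_left hint (exp_pos _).le
    _ = x := by rw [mul_left_comm, ← exp_add, neg_add_cancel, exp_zero, mul_one]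

theorem mul_dawson_le_one (hx : 0 ≤ x) : x * dawson x ≤ 1 := by
  rcases hx.eq_or_lt with rfl | hx
  · simp
  have hint : ∫ t in (0 : ℝ)..x, exp (t ^ 2) ≤ ∫ t in (0 : ℝ)..x, exp (x * t) :=
    intervalIntegral.integral_mono_on hx.le (Continuous.intervalIntegrable (by fun_prop) _ _)
      (Continuous.intervalIntegrable (by fun_prop) _ _)
      fun t ht => exp_le_exp.2 (by nlinarith [ht.1, ht.2])
  have hlin : ∫ t in (0 : ℝ)..x, exp (x * t) = x⁻¹ * (exp (x ^ 2) - 1) := by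
    rw [intervalIntegral.integral_comp_mul_left (fun t => exp t) hx.ne', integral_exp,
      mul_zero, exp_zero, smul_eq_mul, sq]
  have hexp : exp (-x ^ 2) * exp (x ^ 2) = 1 := by rw [← exp_add, neg_add_cancel, exp_zero]
  calc x * dawson x ≤ x * (exp (-x ^ 2) * (x⁻¹ * (exp (x ^ 2) - 1))) := by
        rw [← hlin]
        exact mul_le_mul_of_nonneg_left (mul_le_mul_of_nonneg_left hint (exp_pos _).le) hx.le
    _ = 1 - exp (-x ^ 2) := by field_simp; linear_combination hexp
    _ ≤ 1 := by linarith [exp_pos (-x ^ 2)]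

theorem dawson_le_one (hx : 0 ≤ x) : dawson x ≤ 1 := by
  rcases le_total x 1 with hx1 | hx1
  · exact (dawson_le_self hx).trans hx1
  · nlinarith [mul_dawson_le_one hx, dawson_nonneg hx]

theorem abs_one_sub_two_mul_mul_dawson_le_one (hx : 0 ≤ x) :
    |1 - 2 * x * dawson x| ≤ 1 :=
  abs_le.2 ⟨by nlinarith [mul_dawson_le_one hx], by nlinarith [dawson_nonneg hx]⟩

end NonnegArgument

section GaussianWeight

variable {b s : ℝ}

theorem integrableOn_dawson_deriv_mul_gaussian (hb : 0 ≤ b) (hs : 0 < s) :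
    IntegrableOn (fun x => (1 - 2 * (b * x) * dawson (b * x)) * exp (-s * x ^ 2)) (Ioi 0) := by
  have hcont : Continuous fun x => (1 - 2 * (b * x) * dawson (b * x)) * exp (-s * x ^ 2) := by
    have := continuous_dawson; fun_prop
  refine (integrable_exp_neg_mul_sq hs).integrableOn.mono' hcont.aestronglyMeasurable.restrict ?_
  refine (ae_restrict_iff' measurableSet_Ioi).2 (ae_of_all _ fun x (hx : 0 < x) => ?_)
  rw [norm_mul, norm_of_nonneg (exp_pos _).le]
  exact mul_le_of_le_one_left (exp_pos _).le
    (abs_one_sub_two_mul_mul_dawson_le_one (mul_nonneg hb hx.le))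

theorem hasDerivAt_mul_dawson_mul_gaussian (b s x : ℝ) :
    HasDerivAt (fun x => b * dawson (b * x) * exp (-s * x ^ 2))
      ((b ^ 2 + s) * ((1 - 2 * (b * x) * dawson (b * x)) * exp (-s * x ^ 2))
        - s * exp (-s * x ^ 2)) x := by
  have hdawson : HasDerivAt (fun x => dawson (b * x))
      ((1 - 2 * (b * x) * dawson (b * x)) * b) x :=
    (hasDerivAt_dawson (b * x)).comp x (by simpa using (hasDerivAt_id x).const_mul b)
  have hgauss : HasDerivAt (fun x => exp (-s * x ^ 2)) (exp (-s * x ^ 2) * (-s * (2 * x))) x := by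
    simpa using ((hasDerivAt_pow 2 x).const_mul (-s)).exp
  refine ((hdawson.const_mul b).mul hgauss).congr_deriv ?_
  ring

theorem tendsto_mul_dawson_mul_gaussian_atTop (hb : 0 ≤ b) (hs : 0 < s) :
    Tendsto (fun x => b * dawson (b * x) * exp (-s * x ^ 2)) atTop (𝓝 0) := by
  have hgauss : Tendsto (fun x => exp (-s * x ^ 2)) atTop (𝓝 0) := by
    refine tendsto_exp_atBot.comp ?_
    simpa only [neg_mul, Function.comp_def] using
      tendsto_neg_atTop_atBot.comp ((tendsto_pow_atTop two_ne_zero).const_mul_atTop hs)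
  refine squeeze_zero' ?_ ?_
    (by simpa using hgauss.const_mul b : Tendsto (fun x => b * exp (-s * x ^ 2)) atTop (𝓝 0))
  all_goals filter_upwards [eventually_ge_atTop 0] with x hx
  · exact mul_nonneg (mul_nonneg hb (dawson_nonneg (by positivity))) (exp_pos _).le
  · exact mul_le_mul_of_nonneg_right
      (mul_le_of_le_one_right hb (dawson_le_one (by positivity))) (exp_pos _).le

theorem integral_dawson_deriv_mul_gaussian (hb : 0 ≤ b) (hs : 0 < s) :
    ∫ x in Ioi 0, (1 - 2 * (b * x) * dawson (b * x)) * exp (-s * x ^ 2)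
      = s / (s + b ^ 2) * (√(π / s) / 2) := by
  have hgauss := (integrable_exp_neg_mul_sq hs).integrableOn (s := Ioi 0)
  have hdawson := integrableOn_dawson_deriv_mul_gaussian hb hs
  have hftc := integral_Ioi_of_hasDerivAt_of_tendsto'
    (fun x _ => hasDerivAt_mul_dawson_mul_gaussian b s x)
    ((hdawson.const_mul _).sub (hgauss.const_mul _)) (tendsto_mul_dawson_mul_gaussian_atTop hb hs)
  rw [integral_sub (hdawson.const_mul _) (hgauss.const_mul _), integral_const_mul,
    integral_const_mul, integral_gaussian_Ioi] at hftc
  simp only [mul_zero, dawson_zero, zero_mul, sub_zero] at hftc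
  rw [div_mul_eq_mul_div, eq_div_iff (by positivity)]
  linear_combination hftc

end GaussianWeight

section SqrtSubstitution

variable {c : ℝ}

theorem eqOn_abs_two_mul_rpow_smul_rpow_neg_half_mul_comp_sqrt (hc : 0 < c) (g : ℝ → ℝ) :
    EqOn (fun x => (|(2 : ℝ)| * x ^ ((2 : ℝ) - 1)) •
        ((c * x ^ (2 : ℝ)) ^ (-(1 : ℝ) / 2) * g √(x ^ (2 : ℝ))))
      (fun x => 2 / √c * g x) (Ioi 0) := by
  intro x (hx : 0 < x)
  dsimp only
  have hpow : (c * x ^ 2) ^ (-(1 : ℝ) / 2) = (√c * x)⁻¹ := by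
    rw [neg_div, rpow_neg (by positivity), ← sqrt_eq_rpow, sqrt_mul hc.le, sqrt_sq hx.le]
  rw [show x ^ (2 : ℝ) = x ^ 2 by norm_num, hpow, sqrt_sq hx.le, abs_two]
  norm_num
  field_simp

theorem integrableOn_Ioi_rpow_neg_half_mul_comp_sqrt_iff (hc : 0 < c) (g : ℝ → ℝ) :
    IntegrableOn (fun y => (c * y) ^ (-(1 : ℝ) / 2) * g √y) (Ioi 0) ↔ IntegrableOn g (Ioi 0) := by
  rw [← integrableOn_Ioi_comp_rpow_iff _ two_ne_zero,
    integrableOn_congr_fun (eqOn_abs_two_mul_rpow_smul_rpow_neg_half_mul_comp_sqrt hc g)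
      measurableSet_Ioi]
  exact integrable_const_mul_iff (isUnit_iff_ne_zero.2 (by positivity)) g

theorem integral_Ioi_rpow_neg_half_mul_comp_sqrt (hc : 0 < c) (g : ℝ → ℝ) :
    ∫ y in Ioi 0, (c * y) ^ (-(1 : ℝ) / 2) * g √y = 2 / √c * ∫ x in Ioi 0, g x := by
  rw [← integral_comp_rpow_Ioi _ two_ne_zero,
    setIntegral_congr_fun measurableSet_Ioi
      (eqOn_abs_two_mul_rpow_smul_rpow_neg_half_mul_comp_sqrt hc g), integral_const_mul]

end SqrtSubstitution

/-- for `a, s > 0`,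
`∫₀^∞ (π y)^{−1/2} (1 − 2 a^{1/4} √y F(a^{1/4} √y)) e^{−ys} dy = √s / (s + √a)`. -/
theorem integral_rep_scaling (a s : ℝ) (ha : 0 < a) (hs : 0 < s) :
    IntegrableOn
      (fun y : ℝ => (Real.pi * y) ^ (-(1 : ℝ) / 2) *
        (1 - 2 * a ^ ((1 : ℝ) / 4) * Real.sqrt y * dawson (a ^ ((1 : ℝ) / 4) * Real.sqrt y)) *
        Real.exp (-(y * s))) (Set.Ioi 0) ∧
      ∫ y in Set.Ioi (0 : ℝ), (Real.pi * y) ^ (-(1 : ℝ) / 2) *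
        (1 - 2 * a ^ ((1 : ℝ) / 4) * Real.sqrt y * dawson (a ^ ((1 : ℝ) / 4) * Real.sqrt y)) *
        Real.exp (-(y * s)) = Real.sqrt s / (s + Real.sqrt a) := by
  set b := a ^ ((1 : ℝ) / 4)
  have hb : 0 ≤ b := by positivity
  have hb_sq : b ^ 2 = √a := by
    rw [← rpow_natCast, ← rpow_mul ha.le, sqrt_eq_rpow]
    norm_num
  set g := fun x => (1 - 2 * (b * x) * dawson (b * x)) * exp (-s * x ^ 2)
  have hg : EqOn (fun y => (π * y) ^ (-(1 : ℝ) / 2) * (1 - 2 * b * √y * dawson (b * √y))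
      * exp (-(y * s))) (fun y => (π * y) ^ (-(1 : ℝ) / 2) * g √y) (Ioi 0) := fun y hy => by
    simp only [g, sq_sqrt (le_of_lt hy), neg_mul, mul_comm s y, mul_assoc]
  refine ⟨((integrableOn_Ioi_rpow_neg_half_mul_comp_sqrt_iff pi_pos g).2
    (integrableOn_dawson_deriv_mul_gaussian hb hs)).congr_fun hg.symm measurableSet_Ioi, ?_⟩
  rw [setIntegral_congr_fun measurableSet_Ioi hg, integral_Ioi_rpow_neg_half_mul_comp_sqrt pi_pos,
    integral_dawson_deriv_mul_gaussian hb hs, hb_sq, sqrt_div' _ hs.le]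
  have hsqrt_s : 0 < √s := sqrt_pos.2 hs
  field_simp
  rw [sq_sqrt hs.le]
end

section
/- For every real a ≥ 0, writing z = a(√3 + i) ∈ ℂ, one has | F(z) | ≤ e^{−2a²} · (√π/2) · erf(a) + F(√3 · a), where F on the right-hand side denotes the real Dawson function. -/
/-- The error function `erf(x) = (2/√π) ∫₀ˣ e^{−t²} dt`. -/
noncomputable def erf (x : ℝ) : ℝ := 2 / Real.sqrt Real.pi * ∫ t in (0 : ℝ)..x, Real.exp (-t ^ 2)

/-- The complex Dawson function `F(z) = e^{−z²} · z · ∫₀¹ e^{t²z²} dt`. -/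
noncomputable def cdawson (z : ℂ) : ℂ :=
  Complex.exp (-z ^ 2) * (z * ∫ t in (0 : ℝ)..1, Complex.exp ((t : ℂ) ^ 2 * z ^ 2))

/-! `F(z) = e^{-z²} (G(z) - G(0))` for any primitive `G` of the entire function `e^{w²}`, so the
segment `[0, z]` may be replaced by the broken path `0 → ia → b + ia` when `z = b + ia`. On the
vertical leg `|e^{w²}| = e^{-y²}`, which integrates to `(√π/2) erf a`; on the horizontal leg
`|e^{w²}| = e^{-a²} e^{x²}`; and `|e^{-z²}| = e^{a² - b²}`. Taking `b = √3 a` gives the bound. -/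

open Complex intervalIntegral

theorem integral_mul_comp_line_eq_sub {f g : ℂ → ℂ} (hg : ∀ w, HasDerivAt g (f w) w)
    (hf : Continuous f) (p v : ℂ) (a b : ℝ) :
    ∫ t in a..b, v * f (p + t * v) = g (p + b * v) - g (p + a * v) := by
  refine integral_eq_sub_of_hasDerivAt (f := fun t : ℝ ↦ g (p + t * v)) (fun t _ ↦ ?_)
    ((by fun_prop : Continuous fun t : ℝ ↦ v * f (p + t * v)).intervalIntegrable _ _)
  have hline : HasDerivAt (fun w : ℂ ↦ p + w * v) v t := by
    simpa using ((hasDerivAt_id (t : ℂ)).mul_const v).const_add p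
  simpa [mul_comm] using ((hg _).comp (t : ℂ) hline).comp_ofReal

theorem cdawson_eq_cexp_mul_sub {g : ℂ → ℂ} (hg : ∀ w, HasDerivAt g (cexp (w ^ 2)) w)
    (z : ℂ) : cdawson z = cexp (-z ^ 2) * (g z - g 0) := by
  have h := integral_mul_comp_line_eq_sub hg (by fun_prop) 0 z 0 1
  simp only [zero_add, ofReal_one, ofReal_zero, one_mul, zero_mul, integral_const_mul] at h
  simp only [cdawson, ← h, mul_pow, mul_comm]

theorem norm_sub_vertical_le {g : ℂ → ℂ} (hg : ∀ w, HasDerivAt g (cexp (w ^ 2)) w) {a : ℝ}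
    (ha : 0 ≤ a) :
    ‖g (a * I) - g 0‖ ≤ ∫ y in 0..a, Real.exp (-y ^ 2) := by
  have h := integral_mul_comp_line_eq_sub hg (by fun_prop) 0 I 0 a
  simp only [zero_add, ofReal_zero, zero_mul] at h
  rw [← h]
  refine (norm_integral_le_integral_norm ha).trans_eq (integral_congr fun y _ ↦ ?_)
  simp [norm_exp, mul_pow, ← ofReal_pow]

theorem norm_sub_horizontal_le {g : ℂ → ℂ} (hg : ∀ w, HasDerivAt g (cexp (w ^ 2)) w) (a : ℝ)
    {b : ℝ} (hb : 0 ≤ b) :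
    ‖g (b + a * I) - g (a * I)‖ ≤ Real.exp (-a ^ 2) * ∫ x in 0..b, Real.exp (x ^ 2) := by
  have h := integral_mul_comp_line_eq_sub hg (by fun_prop) (a * I) 1 0 b
  simp only [mul_one, one_mul, ofReal_zero, add_zero] at h
  rw [add_comm, ← h, ← integral_const_mul]
  refine (norm_integral_le_integral_norm hb).trans_eq (integral_congr fun x _ ↦ ?_)
  rw [norm_exp, ← Real.exp_add]
  congr 1
  simp only [sq, mul_re, add_re, ofReal_re, I_re, mul_zero, ofReal_im, I_im, mul_one, sub_self,
    zero_add, add_im, mul_im, add_zero]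
  ring

theorem norm_cdawson_le {a b : ℝ} (ha : 0 ≤ a) (hb : 0 ≤ b) :
    ‖cdawson (b + a * I)‖ ≤
      Real.exp (a ^ 2 - b ^ 2) * (Real.sqrt Real.pi / 2) * erf a + dawson b := by
  obtain ⟨g, hg⟩ := (by fun_prop : Differentiable ℂ fun w ↦ cexp (w ^ 2)).isExactOn_univ
  replace hg : ∀ w, HasDerivAt g (cexp (w ^ 2)) w := fun w ↦ hg w trivial
  have hexp : ‖cexp (-(b + a * I) ^ 2)‖ = Real.exp (a ^ 2 - b ^ 2) := by
    rw [norm_exp]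
    congr 1
    simp [sq]
  have herf : Real.sqrt Real.pi / 2 * erf a = ∫ y in 0..a, Real.exp (-y ^ 2) := by
    rw [erf]
    field_simp
  have hdawson : dawson b =
      Real.exp (a ^ 2 - b ^ 2) * (Real.exp (-a ^ 2) * ∫ x in 0..b, Real.exp (x ^ 2)) := by
    rw [dawson, ← mul_assoc, ← Real.exp_add]
    ring_nf
  calc ‖cdawson (b + a * I)‖ = Real.exp (a ^ 2 - b ^ 2) * ‖g (b + a * I) - g 0‖ := by
        rw [cdawson_eq_cexp_mul_sub hg, norm_mul, hexp]
    _ ≤ Real.exp (a ^ 2 - b ^ 2) * ((∫ y in 0..a, Real.exp (-y ^ 2)) +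
          Real.exp (-a ^ 2) * ∫ x in 0..b, Real.exp (x ^ 2)) := by
        gcongr
        rw [← sub_add_sub_cancel _ (g (a * I)), add_comm]
        exact (norm_add_le _ _).trans
          (add_le_add (norm_sub_vertical_le hg ha) (norm_sub_horizontal_le hg a hb))
    _ = _ := by rw [mul_assoc, herf, hdawson, mul_add]

/-- for `a ≥ 0` and `z = a(√3 + i)`,
`|F(z)| ≤ e^{−2a²} (√π/2) erf(a) + F(√3 a)`. -/
theorem cdawson_abs_bound (a : ℝ) (ha : 0 ≤ a) :
    ‖cdawson ((a : ℂ) * (Real.sqrt 3 + Complex.I))‖ ≤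
      Real.exp (-2 * a ^ 2) * (Real.sqrt Real.pi / 2) * erf a + dawson (Real.sqrt 3 * a) := by
  have hz : (a : ℂ) * (Real.sqrt 3 + I) = ((Real.sqrt 3 * a : ℝ) : ℂ) + a * I := by
    push_cast
    ring
  have hexponent : a ^ 2 - (Real.sqrt 3 * a) ^ 2 = -2 * a ^ 2 := by
    rw [mul_pow, Real.sq_sqrt (by norm_num)]
    ring
  rw [hz, ← hexponent]
  exact norm_cdawson_le ha (by positivity)
end

section
/- For every real a ≥ 0 and z = a(√3 + i) or z = a(√3 − i) in ℂ, one has | 1 − 2 z F(z) | ≤ 1 + 2√π · a · e^{−2a²} · erf(a) + 4 a · F(√3 · a), where F on the right-hand side denotes the real Dawson function. In particular, | 1 − 2 z F(z) | is bounded uniformly in a ≥ 0. -/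
/-!
Let `G` be a primitive of the entire function `e^{ξ²}` (Morera's theorem), so that
`F(z) = e^{−z²} (G(z) − G(0))`. For `z = a(√3 ± i)` integrate along `0 → ±ia → z`: on the vertical
leg `|e^{ξ²}| = e^{−s²}`, on the horizontal one `|e^{(x ± ia)²}| = e^{−a²} e^{x²}`. Together with
`|z| = 2a` and `Re z² = 2a²` this is the bound. It is uniform in `a` because
`∫₀ᵃ e^{−s²} ds ≤ a` and `x e^{−x} ≤ 1` control the `erf` term, while `y F(y) ≤ 1` (compare `e^{x²}`
with `e^{xy}` on `[0, y]`) controls the Dawson term.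
-/

open Complex intervalIntegral

section Primitive

variable {f g : ℂ → ℂ}

theorem sub_eq_integral_of_hasDerivAt_line (hg : ∀ w, HasDerivAt g (f w) w) (hf : Continuous f)
    (w c : ℂ) (x : ℝ) :
    g (w + x * c) - g w = ∫ s in (0 : ℝ)..x, c * f (w + s * c) := by
  have hline (s : ℝ) : HasDerivAt (fun s : ℝ => g (w + s * c)) (c * f (w + s * c)) s := by
    have := (hg _).comp (s : ℂ) (((hasDerivAt_id (s : ℂ)).mul_const c).const_add w)
    simpa [mul_comm] using this.comp_ofReal
  rw [integral_eq_sub_of_hasDerivAt (fun s _ => hline s)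
    (by apply Continuous.intervalIntegrable; fun_prop)]
  simp

theorem norm_sub_le_of_hasDerivAt_line (hg : ∀ w, HasDerivAt g (f w) w) (hf : Continuous f)
    (w c : ℂ) {x : ℝ} (hx : 0 ≤ x) {B : ℝ → ℝ} (hB : ∀ s : ℝ, ‖f (w + s * c)‖ ≤ B s)
    (hB_int : IntervalIntegrable B MeasureTheory.volume 0 x) :
    ‖g (w + x * c) - g w‖ ≤ ‖c‖ * ∫ s in (0 : ℝ)..x, B s := by
  rw [sub_eq_integral_of_hasDerivAt_line hg hf, ← integral_const_mul]
  refine norm_integral_le_of_norm_le hx (Filter.Eventually.of_forall fun s _ => ?_)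
    (hB_int.const_mul _)
  rw [norm_mul]
  exact mul_le_mul_of_nonneg_left (hB s) (norm_nonneg c)

end Primitive

theorem exists_hasDerivAt_cexp_sq : ∃ g : ℂ → ℂ, ∀ w, HasDerivAt g (exp (w ^ 2)) w := by
  obtain ⟨g, hg⟩ := (show Differentiable ℂ fun w : ℂ => exp (w ^ 2) by fun_prop).isExactOn_univ
  exact ⟨g, fun w => hg w (Set.mem_univ w)⟩

theorem cdawson_eq_of_hasDerivAt {g : ℂ → ℂ} (hg : ∀ w, HasDerivAt g (exp (w ^ 2)) w) (z : ℂ) :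
    cdawson z = exp (-z ^ 2) * (g z - g 0) := by
  have := sub_eq_integral_of_hasDerivAt_line hg (by fun_prop) 0 z 1
  simp only [zero_add, ofReal_one, one_mul] at this
  rw [cdawson, this, ← integral_const_mul]
  simp only [mul_pow]

theorem norm_cexp_sq (w : ℂ) : ‖exp (w ^ 2)‖ = Real.exp (w.re ^ 2 - w.im ^ 2) := by
  rw [norm_exp, sq w, mul_re]; ring_nf

theorem sqrt_pi_mul_erf (x : ℝ) :
    Real.sqrt Real.pi * erf x = 2 * ∫ t in (0 : ℝ)..x, Real.exp (-t ^ 2) := by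
  have : Real.sqrt Real.pi ≠ 0 := (Real.sqrt_pos.mpr Real.pi_pos).ne'
  rw [erf]; field_simp

section UnitImaginary

variable {c : ℂ}

theorem re_eq_zero_of_eq_I_or (hc : c = I ∨ c = -I) : c.re = 0 := by
  rcases hc with rfl | rfl <;> simp

theorem im_sq_eq_one_of_eq_I_or (hc : c = I ∨ c = -I) : c.im ^ 2 = 1 := by
  rcases hc with rfl | rfl <;> simp

theorem norm_sqrt_three_add (hc : c = I ∨ c = -I) : ‖(Real.sqrt 3 : ℂ) + c‖ = 2 := by
  rw [norm_def, normSq_apply]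
  simp only [add_re, add_im, ofReal_re, ofReal_im, re_eq_zero_of_eq_I_or hc, add_zero, zero_add,
    ← sq, im_sq_eq_one_of_eq_I_or hc]
  rw [Real.sq_sqrt (by norm_num)]
  norm_num

theorem re_sqrt_three_add_sq (hc : c = I ∨ c = -I) : (((Real.sqrt 3 : ℂ) + c) ^ 2).re = 2 := by
  rw [sq, mul_re]
  simp only [add_re, add_im, ofReal_re, ofReal_im, re_eq_zero_of_eq_I_or hc, add_zero, zero_add,
    ← sq, im_sq_eq_one_of_eq_I_or hc]
  rw [Real.sq_sqrt (by norm_num)]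
  norm_num

theorem norm_sub_le_of_hasDerivAt_cexp_sq {g : ℂ → ℂ} (hg : ∀ w, HasDerivAt g (exp (w ^ 2)) w)
    {a : ℝ} (ha : 0 ≤ a) (hc : c = I ∨ c = -I) :
    ‖g (a * (Real.sqrt 3 + c)) - g 0‖ ≤
      (∫ s in (0 : ℝ)..a, Real.exp (-s ^ 2)) +
        Real.exp (-a ^ 2) * ∫ x in (0 : ℝ)..(Real.sqrt 3 * a), Real.exp (x ^ 2) := by
  have hc_norm : ‖c‖ = 1 := by rcases hc with rfl | rfl <;> simp
  have vertical : ‖g (a * c) - g 0‖ ≤ ∫ s in (0 : ℝ)..a, Real.exp (-s ^ 2) := by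
    have := norm_sub_le_of_hasDerivAt_line hg (by fun_prop) 0 c ha
      (B := fun s => Real.exp (-s ^ 2)) (fun s => by
        rw [zero_add, norm_cexp_sq]
        simp [re_eq_zero_of_eq_I_or hc, mul_pow, im_sq_eq_one_of_eq_I_or hc])
      (by apply Continuous.intervalIntegrable; fun_prop)
    rwa [zero_add, hc_norm, one_mul] at this
  have horizontal : ‖g (a * c + (Real.sqrt 3 * a : ℝ) * 1) - g (a * c)‖ ≤
      Real.exp (-a ^ 2) * ∫ x in (0 : ℝ)..(Real.sqrt 3 * a), Real.exp (x ^ 2) := by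
    have := norm_sub_le_of_hasDerivAt_line hg (by fun_prop) (a * c) 1 (x := Real.sqrt 3 * a)
      (by positivity) (B := fun s => Real.exp (-a ^ 2) * Real.exp (s ^ 2)) (fun s => by
        rw [norm_cexp_sq, ← Real.exp_add]
        simp [re_eq_zero_of_eq_I_or hc, mul_pow, im_sq_eq_one_of_eq_I_or hc])
      (by apply Continuous.intervalIntegrable; fun_prop)
    rwa [norm_one, one_mul, integral_const_mul] at this
  have hz : (a : ℂ) * (Real.sqrt 3 + c) = a * c + (Real.sqrt 3 * a : ℝ) * 1 := by push_cast; ring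
  rw [hz, ← sub_add_sub_cancel _ (g (a * c)), add_comm]
  exact (norm_add_le _ _).trans (add_le_add vertical horizontal)

theorem norm_one_sub_two_mul_cdawson_le {a : ℝ} (ha : 0 ≤ a) {c : ℂ} (hc : c = I ∨ c = -I) :
    ‖1 - 2 * (a * (Real.sqrt 3 + c)) * cdawson (a * (Real.sqrt 3 + c))‖ ≤
      1 + 2 * Real.sqrt Real.pi * a * Real.exp (-2 * a ^ 2) * erf a
        + 4 * a * dawson (Real.sqrt 3 * a) := by
  obtain ⟨g, hg⟩ := exists_hasDerivAt_cexp_sq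
  set z : ℂ := a * (Real.sqrt 3 + c)
  have hz_norm : ‖z‖ = 2 * a := by
    rw [norm_mul, norm_sqrt_three_add hc, norm_real, Real.norm_of_nonneg ha, mul_comm]
  have hz_sq : ‖exp (-z ^ 2)‖ = Real.exp (-2 * a ^ 2) := by
    rw [norm_exp, neg_re, mul_pow, ← ofReal_pow, re_ofReal_mul, re_sqrt_three_add_sq hc]
    ring_nf
  have h_dawson : dawson (Real.sqrt 3 * a) = Real.exp (-2 * a ^ 2) *
      (Real.exp (-a ^ 2) * ∫ x in (0 : ℝ)..(Real.sqrt 3 * a), Real.exp (x ^ 2)) := by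
    rw [dawson, ← mul_assoc, ← Real.exp_add, mul_pow, Real.sq_sqrt (by norm_num)]
    ring_nf
  calc ‖1 - 2 * z * cdawson z‖ ≤ ‖(1 : ℂ)‖ + ‖2 * z * cdawson z‖ := norm_sub_le _ _
    _ = 1 + 2 * ‖z‖ * (‖exp (-z ^ 2)‖ * ‖g z - g 0‖) := by
        rw [cdawson_eq_of_hasDerivAt hg]
        simp only [norm_one, norm_mul, Complex.norm_two]
    _ ≤ 1 + 4 * a * Real.exp (-2 * a ^ 2) * ((∫ s in (0 : ℝ)..a, Real.exp (-s ^ 2)) +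
          Real.exp (-a ^ 2) * ∫ x in (0 : ℝ)..(Real.sqrt 3 * a), Real.exp (x ^ 2)) := by
        rw [hz_norm, hz_sq]
        have := mul_le_mul_of_nonneg_left (norm_sub_le_of_hasDerivAt_cexp_sq hg ha hc)
          (by positivity : 0 ≤ 4 * a * Real.exp (-2 * a ^ 2))
        linarith
    _ = _ := by
        linear_combination -(2 * a * Real.exp (-2 * a ^ 2)) * sqrt_pi_mul_erf a - 4 * a * h_dawson

end UnitImaginary

theorem integral_exp_neg_sq_le {x : ℝ} (hx : 0 ≤ x) : ∫ t in (0 : ℝ)..x, Real.exp (-t ^ 2) ≤ x := by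
  calc ∫ t in (0 : ℝ)..x, Real.exp (-t ^ 2) ≤ ∫ _ in (0 : ℝ)..x, (1 : ℝ) := by
        refine integral_mono_on hx (by apply Continuous.intervalIntegrable; fun_prop)
          intervalIntegrable_const fun t _ => ?_
        rw [Real.exp_le_one_iff]; nlinarith
    _ = x := by simp

theorem mul_dawson_le_one_s14 {y : ℝ} (hy : 0 ≤ y) : y * dawson y ≤ 1 := by
  have h_int : y * ∫ x in (0 : ℝ)..y, Real.exp (x * y) = Real.exp (y ^ 2) - 1 := by
    rw [← integral_const_mul, integral_eq_sub_of_hasDerivAt (f := fun x => Real.exp (x * y))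
      (fun x _ => by simpa [mul_comm] using ((hasDerivAt_id x).mul_const y).exp)
      (by apply Continuous.intervalIntegrable; fun_prop)]
    simp [sq]
  have h_mono : ∫ x in (0 : ℝ)..y, Real.exp (x ^ 2) ≤ ∫ x in (0 : ℝ)..y, Real.exp (x * y) :=
    integral_mono_on hy (by apply Continuous.intervalIntegrable; fun_prop)
      (by apply Continuous.intervalIntegrable; fun_prop) fun x hx => by
        rw [Real.exp_le_exp, sq]; exact mul_le_mul_of_nonneg_left hx.2 hx.1
  calc y * dawson y = Real.exp (-y ^ 2) * (y * ∫ x in (0 : ℝ)..y, Real.exp (x ^ 2)) := by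
        rw [dawson]; ring
    _ ≤ Real.exp (-y ^ 2) * (Real.exp (y ^ 2) - 1) := by
        gcongr; rw [← h_int]; exact mul_le_mul_of_nonneg_left h_mono hy
    _ ≤ 1 := by
        rw [mul_sub, ← Real.exp_add, neg_add_cancel, Real.exp_zero]
        linarith [Real.exp_pos (-y ^ 2)]

theorem mul_exp_neg_le_one (x : ℝ) : x * Real.exp (-x) ≤ 1 := by
  rw [Real.exp_neg, ← div_eq_mul_inv, div_le_one (Real.exp_pos x)]
  linarith [Real.add_one_le_exp x]

theorem sqrt_pi_mul_exp_mul_erf_le_two {a : ℝ} (ha : 0 ≤ a) :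
    2 * Real.sqrt Real.pi * a * Real.exp (-2 * a ^ 2) * erf a ≤ 2 := by
  have h_erf := sqrt_pi_mul_erf a
  calc 2 * Real.sqrt Real.pi * a * Real.exp (-2 * a ^ 2) * erf a
      = 4 * a * Real.exp (-2 * a ^ 2) * ∫ t in (0 : ℝ)..a, Real.exp (-t ^ 2) := by
        linear_combination 2 * a * Real.exp (-2 * a ^ 2) * h_erf
    _ ≤ 4 * a * Real.exp (-2 * a ^ 2) * a := by gcongr; exact integral_exp_neg_sq_le ha
    _ = 2 * ((2 * a ^ 2) * Real.exp (-(2 * a ^ 2))) := by ring_nf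
    _ ≤ 2 := by linarith [mul_exp_neg_le_one (2 * a ^ 2)]

theorem mul_dawson_sqrt_three_mul_le_four {a : ℝ} (ha : 0 ≤ a) :
    4 * a * dawson (Real.sqrt 3 * a) ≤ 4 := by
  have h_sqrt : 1 ≤ Real.sqrt 3 := Real.one_le_sqrt.mpr (by norm_num)
  calc 4 * a * dawson (Real.sqrt 3 * a)
      = 4 / Real.sqrt 3 * (Real.sqrt 3 * a * dawson (Real.sqrt 3 * a)) := by
        field_simp
    _ ≤ 4 / Real.sqrt 3 * 1 := by gcongr; exact mul_dawson_le_one_s14 (by positivity)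
    _ ≤ 4 := by rw [mul_one, div_le_iff₀ (by positivity)]; linarith

/-- for `a ≥ 0` and `z = a(√3 ± i)`,
`|1 − 2zF(z)| ≤ 1 + 2√π a e^{−2a²} erf(a) + 4a F(√3 a)`; in particular `|1 − 2zF(z)|` is
bounded uniformly in `a ≥ 0`. -/
theorem cdawson_deriv_abs_bound :
    (∀ a : ℝ, 0 ≤ a → ∀ z : ℂ,
        (z = (a : ℂ) * (Real.sqrt 3 + Complex.I) ∨
          z = (a : ℂ) * (Real.sqrt 3 - Complex.I)) →
        ‖1 - 2 * z * cdawson z‖ ≤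
          1 + 2 * Real.sqrt Real.pi * a * Real.exp (-2 * a ^ 2) * erf a
            + 4 * a * dawson (Real.sqrt 3 * a)) ∧
    ∃ C : ℝ, ∀ a : ℝ, 0 ≤ a → ∀ z : ℂ,
        (z = (a : ℂ) * (Real.sqrt 3 + Complex.I) ∨
          z = (a : ℂ) * (Real.sqrt 3 - Complex.I)) →
        ‖1 - 2 * z * cdawson z‖ ≤ C := by
  have bound : ∀ a : ℝ, 0 ≤ a → ∀ z : ℂ,
      (z = (a : ℂ) * (Real.sqrt 3 + I) ∨ z = (a : ℂ) * (Real.sqrt 3 - I)) →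
      ‖1 - 2 * z * cdawson z‖ ≤ 1 + 2 * Real.sqrt Real.pi * a * Real.exp (-2 * a ^ 2) * erf a
        + 4 * a * dawson (Real.sqrt 3 * a) := by
    rintro a ha z (rfl | rfl)
    · exact norm_one_sub_two_mul_cdawson_le ha (Or.inl rfl)
    · simpa only [← sub_eq_add_neg] using norm_one_sub_two_mul_cdawson_le ha (Or.inr rfl)
  refine ⟨bound, 7, fun a ha z hz => (bound a ha z hz).trans ?_⟩
  linarith [sqrt_pi_mul_exp_mul_erf_le_two ha, mul_dawson_sqrt_three_mul_le_four ha]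
end
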